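/- arXiv:1405.5704 — 2 statements merged into one kernel-verified Lean document; each statement's English description precedes it below -/
import Mathlib

section
/- In the mafia-fraud model, for all 2 ≤ i ≤ n: Pr(S_i | C_i ≠ C̃_i, M_i) = 1/2 + (1/2) · Pr(c_i = c̃_i | C_i ≠ C̃_i, M_i), and moreover Pr(c_i = c̃_i | C_i ≠ C̃_i, M_i) = [ Pr(S_{i−1} | M_{i−1}, C_{i−1} ≠ C̃_{i−1}) · Pr(M_{i−1} | C_{i−1} ≠ C̃_{i−1}) · ( 1/2 − (1/2)^i ) ] / [ Pr(M_i | C_i ≠ C̃_i) · (1 − (1/2)^i) ], with the stopping condition Pr(S_1 | C_1 ≠ C̃_1, M_1) = 1/2. -/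
/-!  The mafia-fraud model of the paper.  Bits are elements of `ZMod 2`
(XOR is `+`, AND is `*`).  A sample point consists of the uniformly
distributed, mutually independent `n`-bit strings
`Q, R⁰, R¹, c̃, c, b` (key register, answer registers, adversary's pre-ask
challenges, verifier's challenges, adversary's random answer bits). -/

/-- Sample space: `(Q, R⁰, R¹, c̃, c, b)`. -/
abbrev MafiaΩ (n : ℕ) :=
  (Fin n → ZMod 2) × (Fin n → ZMod 2) × (Fin n → ZMod 2) ×
  (Fin n → ZMod 2) × (Fin n → ZMod 2) × (Fin n → ZMod 2)

namespace Mafia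

variable {n : ℕ}

def keyQ (ω : MafiaΩ n) : Fin n → ZMod 2 := ω.1
def reg0 (ω : MafiaΩ n) : Fin n → ZMod 2 := ω.2.1
def reg1 (ω : MafiaΩ n) : Fin n → ZMod 2 := ω.2.2.1
/-- `c̃`, the challenges the adversary sends to the prover. -/
def cAdv (ω : MafiaΩ n) : Fin n → ZMod 2 := ω.2.2.2.1
/-- `c`, the verifier's challenges. -/
def cVer (ω : MafiaΩ n) : Fin n → ZMod 2 := ω.2.2.2.2.1
/-- `b`, the adversary's random answer bits. -/
def bAdv (ω : MafiaΩ n) : Fin n → ZMod 2 := ω.2.2.2.2.2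

/-- `f_Q` applied to the length-`i` prefix of the challenge string `c`. -/
def fQ (Q c : Fin n → ZMod 2) (i : ℕ) : ZMod 2 :=
  ∑ j : Fin n, if (j : ℕ) < i then c j * Q j else 0

/-- `R_j^{b}`: the register bit selected by the bit `b` at round `j+1`. -/
def reg (ω : MafiaΩ n) (b : ZMod 2) (j : Fin n) : ZMod 2 :=
  if b = 0 then reg0 ω j else reg1 ω j

/-- The prover's response `r̃` to the adversary at round `j+1`:
`r̃ = R_j^{c̃_j} ⊕ f_Q(C̃_j)`. -/
def resp (ω : MafiaΩ n) (j : Fin n) : ZMod 2 :=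
  reg ω (cAdv ω j) j + fQ (keyQ ω) (cAdv ω) ((j : ℕ) + 1)

/-- The adversary's answer to the verifier at round `j+1`: it relays `r̃` when
`c_j = c̃_j` and answers with the random bit `b_j` otherwise. -/
def ans (ω : MafiaΩ n) (j : Fin n) : ZMod 2 :=
  if cVer ω j = cAdv ω j then resp ω j else bAdv ω j

/-- The correct answer expected by the verifier at round `j+1`. -/
def corr (ω : MafiaΩ n) (j : Fin n) : ZMod 2 :=
  reg ω (cVer ω j) j + fQ (keyQ ω) (cVer ω) ((j : ℕ) + 1)

/-- `M_i`: the adversary wins the first `i` rounds. -/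
def M (i : ℕ) (ω : MafiaΩ n) : Prop :=
  ∀ j : Fin n, (j : ℕ) < i → ans ω j = corr ω j

/-- `S_i`: the guess `f_Q(C_i) ⊕ f_Q(C̃_i) = 0` is correct at round `i`. -/
def S (i : ℕ) (ω : MafiaΩ n) : Prop :=
  fQ (keyQ ω) (cVer ω) i = fQ (keyQ ω) (cAdv ω) i

/-- The event `C_i ≠ C̃_i`. -/
def Cne (i : ℕ) (ω : MafiaΩ n) : Prop :=
  ∃ j : Fin n, (j : ℕ) < i ∧ cVer ω j ≠ cAdv ω j

open Classical in
/-- Probability of an event under the uniform distribution on `MafiaΩ n`. -/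
noncomputable def pr (n : ℕ) (E : MafiaΩ n → Prop) : ℚ :=
  ((Finset.univ.filter E).card : ℚ) / ((Finset.univ : Finset (MafiaΩ n)).card : ℚ)

/-- Conditional probability `Pr(A | B)`. -/
noncomputable def cpr (n : ℕ) (A B : MafiaΩ n → Prop) : ℚ :=
  pr n (fun ω => A ω ∧ B ω) / pr n B

end Mafia


namespace Mafia

/-- The event `c_i = c̃_i` (the `i`-th challenges agree, `i ≥ 1`). -/
def lastEq (i : ℕ) (ω : MafiaΩ n) : Prop :=
  ∀ j : Fin n, (j : ℕ) + 1 = i → cVer ω j = cAdv ω j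

end Mafia


/-!
Write `A_i` for the event `C_i ≠ C̃_i ∧ M_i`; round `i` has index `k = i - 1` in `Fin n`.
Both identities come from involutions of the sample space that fix everything the first `k`
rounds depend on, so that they preserve the uniform measure and the events of those rounds.

* Flipping the verifier's challenge `c_k` swaps `{c_i = c̃_i}` and `{c_i ≠ c̃_i}`. When the
  challenges agree the adversary relays the prover's answer, which is correct exactly when `S_i`
  holds, and then `S_i = S_{i-1}`; hence `2 Pr(c_i = c̃_i, A_i) = Pr(S_{i-1}, A_{i-1})`.
* Flipping the key bit `Q_k` shifts `f_Q(C_i)` by `c_k` and `f_Q(C̃_i)` by `c̃_k`, hence both the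
  relayed and the correct answer of round `i` by `c_k` when `c_i = c̃_i`. Shifting the random
  answer bit `b_k` by `c_k` as well, the outcome of every round is kept, while `S_i` is toggled
  when `c_i ≠ c̃_i`. So `S_i` has conditional probability `1/2` on `A_i ∩ {c_i ≠ c̃_i}`, and `1` on
  `A_i ∩ {c_i = c̃_i}` by the first point.

Together with `Pr(C_i ≠ C̃_i) = 1 - 2^{-i}` (flip `c_k` again) this gives the recursion.
-/

open Finset Function

theorem Finset.two_mul_card_filter_of_involutive {α : Type*} {s : Finset α} {p : α → Prop}
    [DecidablePred p] {φ : α → α} (hφ : Involutive φ) (hs : ∀ a ∈ s, φ a ∈ s)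
    (hp : ∀ a ∈ s, p (φ a) ↔ ¬ p a) :
    2 * #(s.filter p) = #s := by
  have hswap : #(s.filter p) = #(s.filter fun a ↦ ¬ p a) := by
    refine card_nbij' φ φ (fun a ha ↦ ?_) (fun a ha ↦ ?_) (fun a _ ↦ hφ a) (fun a _ ↦ hφ a)
    · simp only [coe_filter, Set.mem_ofPred_eq] at ha ⊢
      exact ⟨hs a ha.1, fun h ↦ (hp a ha.1).1 h ha.2⟩
    · simp only [coe_filter, Set.mem_ofPred_eq] at ha ⊢
      exact ⟨hs a ha.1, (hp a ha.1).2 ha.2⟩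
  rw [two_mul]
  nth_rw 2 [hswap]
  exact card_filter_add_card_filter_not p

lemma ZMod.add_eq_add_iff_ne_of_ne {a b : ZMod 2} (hab : a ≠ b) (x y : ZMod 2) :
    x + a = y + b ↔ x ≠ y := by
  revert a b x y; decide

namespace Mafia

variable {n : ℕ}

lemma pr_eq_card_div (E : MafiaΩ n → Prop) [DecidablePred E] :
    pr n E = #(univ.filter E) / Fintype.card (MafiaΩ n) := by
  unfold pr
  congr

lemma pr_congr {E F : MafiaΩ n → Prop} (h : ∀ ω, E ω ↔ F ω) : pr n E = pr n F :=
  congrArg (pr n) (funext fun ω ↦ propext (h ω))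

lemma pr_and_comm (E F : MafiaΩ n → Prop) :
    pr n (fun ω ↦ E ω ∧ F ω) = pr n (fun ω ↦ F ω ∧ E ω) :=
  pr_congr fun _ ↦ and_comm

lemma pr_eq_zero {E : MafiaΩ n → Prop} (h : ∀ ω, ¬ E ω) : pr n E = 0 := by
  classical
  simp [pr, filter_false_of_mem fun ω _ ↦ h ω]

lemma pr_of_forall {E : MafiaΩ n → Prop} (h : ∀ ω, E ω) : pr n E = 1 := by
  classical
  simp [pr, filter_true_of_mem fun ω _ ↦ h ω]

lemma pr_ne_zero {E : MafiaΩ n → Prop} {ω : MafiaΩ n} (h : E ω) : pr n E ≠ 0 := by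
  classical
  have : 0 < #(univ.filter E) := card_pos.2 ⟨ω, by simpa using h⟩
  unfold pr
  positivity

lemma pr_and_add_pr_and_not (E R : MafiaΩ n → Prop) :
    pr n (fun ω ↦ E ω ∧ R ω) + pr n (fun ω ↦ E ω ∧ ¬ R ω) = pr n E := by
  classical
  rw [pr_eq_card_div, pr_eq_card_div, pr_eq_card_div, ← add_div, ← filter_filter,
    ← filter_filter]
  exact_mod_cast congrArg (fun m : ℕ ↦ (m : ℚ) / Fintype.card (MafiaΩ n))
    (card_filter_add_card_filter_not R)

lemma pr_add_pr_not (E : MafiaΩ n → Prop) : pr n E + pr n (fun ω ↦ ¬ E ω) = 1 := by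
  rw [← pr_of_forall (E := fun _ ↦ True) fun _ ↦ trivial,
    ← pr_and_add_pr_and_not (fun _ ↦ True) E]
  simp only [true_and]

lemma two_mul_pr_and_of_involutive {φ : MafiaΩ n → MafiaΩ n} (hφ : Involutive φ)
    {P Q : MafiaΩ n → Prop} (hP : ∀ ω, P ω → P (φ ω)) (hQ : ∀ ω, P ω → (Q (φ ω) ↔ ¬ Q ω)) :
    2 * pr n (fun ω ↦ P ω ∧ Q ω) = pr n P := by
  classical
  rw [pr_eq_card_div, pr_eq_card_div, ← mul_div_assoc, ← filter_filter]
  exact_mod_cast congrArg (fun m : ℕ ↦ (m : ℚ) / Fintype.card (MafiaΩ n))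
    (two_mul_card_filter_of_involutive hφ (by simpa using hP) (by simpa using hQ))

lemma fQ_congr {Q Q' c c' : Fin n → ZMod 2} {m : ℕ}
    (h : ∀ j : Fin n, (j : ℕ) < m → Q j = Q' j ∧ c j = c' j) : fQ Q c m = fQ Q' c' m := by
  refine sum_congr rfl fun j _ ↦ ?_
  split_ifs with hj
  · rw [(h j hj).1, (h j hj).2]
  · rfl

lemma fQ_succ (Q c : Fin n → ZMod 2) (k : Fin n) :
    fQ Q c (k + 1) = fQ Q c k + c k * Q k := by
  have hk : c k * Q k = ∑ j, if j = k then c j * Q j else 0 := by simp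
  rw [hk, fQ, fQ, ← sum_add_distrib]
  refine sum_congr rfl fun j _ ↦ ?_
  by_cases hjk : j = k
  · subst hjk; simp
  · have : (j : ℕ) ≠ k := Fin.val_ne_of_ne hjk
    simp only [hjk, show (j : ℕ) < k + 1 ↔ (j : ℕ) < k by omega, if_false, add_zero]

lemma fQ_add_single_succ (Q c : Fin n → ZMod 2) (k : Fin n) :
    fQ (Q + Pi.single k 1) c (k + 1) = fQ Q c (k + 1) + c k := by
  have hbelow : fQ (Q + Pi.single k 1) c k = fQ Q c k :=
    fQ_congr fun j hj ↦ ⟨by simp [Pi.single_eq_of_ne (Fin.ne_of_lt hj)], rfl⟩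
  rw [fQ_succ, fQ_succ, hbelow, Pi.add_apply, Pi.single_eq_same]
  ring

def AgreeBelow (m : ℕ) (ω ω' : MafiaΩ n) : Prop :=
  ∀ j : Fin n, (j : ℕ) < m → keyQ ω j = keyQ ω' j ∧ reg0 ω j = reg0 ω' j ∧
    reg1 ω j = reg1 ω' j ∧ cAdv ω j = cAdv ω' j ∧ cVer ω j = cVer ω' j ∧ bAdv ω j = bAdv ω' j

namespace AgreeBelow

variable {m : ℕ} {ω ω' : MafiaΩ n}

lemma mono (h : AgreeBelow m ω ω') {l : ℕ} (hl : l ≤ m) : AgreeBelow l ω ω' :=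
  fun j hj ↦ h j (hj.trans_le hl)

lemma fQ_cVer_eq (h : AgreeBelow m ω ω') :
    fQ (keyQ ω) (cVer ω) m = fQ (keyQ ω') (cVer ω') m :=
  fQ_congr fun j hj ↦ ⟨(h j hj).1, (h j hj).2.2.2.2.1⟩

lemma fQ_cAdv_eq (h : AgreeBelow m ω ω') :
    fQ (keyQ ω) (cAdv ω) m = fQ (keyQ ω') (cAdv ω') m :=
  fQ_congr fun j hj ↦ ⟨(h j hj).1, (h j hj).2.2.2.1⟩

lemma ans_eq (h : AgreeBelow m ω ω') {j : Fin n} (hj : (j : ℕ) < m) : ans ω j = ans ω' j := by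
  obtain ⟨-, h0, h1, hA, hV, hb⟩ := h j hj
  simp only [ans, resp, reg, h0, h1, hA, hV, hb, (h.mono hj).fQ_cAdv_eq]

lemma corr_eq (h : AgreeBelow m ω ω') {j : Fin n} (hj : (j : ℕ) < m) :
    corr ω j = corr ω' j := by
  obtain ⟨-, h0, h1, -, hV, -⟩ := h j hj
  simp only [corr, reg, h0, h1, hV, (h.mono hj).fQ_cVer_eq]

lemma M_iff (h : AgreeBelow m ω ω') : M m ω ↔ M m ω' :=
  forall₂_congr fun _ hj ↦ by rw [h.ans_eq hj, h.corr_eq hj]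

lemma S_iff (h : AgreeBelow m ω ω') : S m ω ↔ S m ω' := by
  rw [S, S, h.fQ_cVer_eq, h.fQ_cAdv_eq]

lemma Cne_iff (h : AgreeBelow m ω ω') : Cne m ω ↔ Cne m ω' :=
  exists_congr fun j ↦ and_congr_right fun hj ↦ by rw [(h j hj).2.2.2.1, (h j hj).2.2.2.2.1]

end AgreeBelow

section Round

variable (k : Fin n) (ω : MafiaΩ n)

lemma M_succ : M (k + 1) ω ↔ M k ω ∧ ans ω k = corr ω k := by
  refine ⟨fun h ↦ ⟨fun j hj ↦ h j (by omega), h k (by omega)⟩, fun ⟨h, hk⟩ j hj ↦ ?_⟩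
  rcases Nat.lt_succ_iff_lt_or_eq.1 hj with hj | hj
  · exact h j hj
  · rwa [Fin.ext hj]

lemma Cne_succ : Cne (k + 1) ω ↔ Cne k ω ∨ cVer ω k ≠ cAdv ω k := by
  refine ⟨fun ⟨j, hj, hne⟩ ↦ ?_, ?_⟩
  · rcases Nat.lt_succ_iff_lt_or_eq.1 hj with hj | hj
    · exact .inl ⟨j, hj, hne⟩
    · exact .inr (Fin.ext hj ▸ hne)
  · rintro (⟨j, hj, hne⟩ | hne)
    · exact ⟨j, by omega, hne⟩
    · exact ⟨k, by omega, hne⟩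

lemma lastEq_succ : lastEq (k + 1) ω ↔ cVer ω k = cAdv ω k :=
  ⟨fun h ↦ h k rfl, fun h _ hj ↦ Fin.ext (Nat.succ_injective hj) ▸ h⟩

variable {k ω}

lemma S_succ_iff_of_eq (h : cVer ω k = cAdv ω k) : S (k + 1) ω ↔ S k ω := by
  rw [S, S, fQ_succ, fQ_succ, h, add_left_inj]

lemma ans_eq_corr_iff_of_eq (h : cVer ω k = cAdv ω k) : ans ω k = corr ω k ↔ S (k + 1) ω := by
  rw [ans, if_pos h, resp, corr, S, h, add_right_inj, eq_comm]

end Round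

section Flips

variable (k : Fin n) (ω : MafiaΩ n)

@[simp] lemma keyQ_mk (Q R₀ R₁ c' c b : Fin n → ZMod 2) : keyQ (Q, R₀, R₁, c', c, b) = Q := rfl
@[simp] lemma reg0_mk (Q R₀ R₁ c' c b : Fin n → ZMod 2) : reg0 (Q, R₀, R₁, c', c, b) = R₀ := rfl
@[simp] lemma reg1_mk (Q R₀ R₁ c' c b : Fin n → ZMod 2) : reg1 (Q, R₀, R₁, c', c, b) = R₁ := rfl
@[simp] lemma cAdv_mk (Q R₀ R₁ c' c b : Fin n → ZMod 2) : cAdv (Q, R₀, R₁, c', c, b) = c' := rfl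
@[simp] lemma cVer_mk (Q R₀ R₁ c' c b : Fin n → ZMod 2) : cVer (Q, R₀, R₁, c', c, b) = c := rfl
@[simp] lemma bAdv_mk (Q R₀ R₁ c' c b : Fin n → ZMod 2) : bAdv (Q, R₀, R₁, c', c, b) = b := rfl

lemma mk_components : (keyQ ω, reg0 ω, reg1 ω, cAdv ω, cVer ω, bAdv ω) = ω := rfl

def flipCVer : MafiaΩ n :=
  (keyQ ω, reg0 ω, reg1 ω, cAdv ω, cVer ω + Pi.single k 1, bAdv ω)

def flipKey : MafiaΩ n :=
  (keyQ ω + Pi.single k 1, reg0 ω, reg1 ω, cAdv ω, cVer ω, bAdv ω + Pi.single k (cVer ω k))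

lemma add_single_add_single (f : Fin n → ZMod 2) (a : ZMod 2) :
    f + Pi.single k a + Pi.single k a = f := by
  rw [add_assoc, ← Pi.single_add, CharTwo.add_self_eq_zero, Pi.single_zero, add_zero]

lemma flipCVer_involutive : Involutive (flipCVer k) := fun ω ↦ by
  simp [flipCVer, add_single_add_single, mk_components]

lemma flipKey_involutive : Involutive (flipKey k) := fun ω ↦ by
  simp [flipKey, add_single_add_single, mk_components]

lemma agreeBelow_flipCVer : AgreeBelow k (flipCVer k ω) ω := fun j hj ↦ by
  simp [flipCVer, Pi.single_eq_of_ne (Fin.ne_of_lt hj)]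

lemma agreeBelow_flipKey : AgreeBelow k (flipKey k ω) ω := fun j hj ↦ by
  simp [flipKey, Pi.single_eq_of_ne (Fin.ne_of_lt hj)]

lemma cVer_flipCVer_eq_iff :
    cVer (flipCVer k ω) k = cAdv (flipCVer k ω) k ↔ ¬ cVer ω k = cAdv ω k := by
  simpa [flipCVer] using
    ZMod.add_eq_add_iff_ne_of_ne (a := 1) (b := 0) (by decide) (cVer ω k) (cAdv ω k)

@[simp] lemma keyQ_flipKey : keyQ (flipKey k ω) = keyQ ω + Pi.single k 1 := rfl
@[simp] lemma cAdv_flipKey : cAdv (flipKey k ω) = cAdv ω := rfl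
@[simp] lemma cVer_flipKey : cVer (flipKey k ω) = cVer ω := rfl
@[simp] lemma bAdv_flipKey : bAdv (flipKey k ω) = bAdv ω + Pi.single k (cVer ω k) := rfl
@[simp] lemma reg_flipKey : reg (flipKey k ω) = reg ω := rfl

lemma corr_flipKey : corr (flipKey k ω) k = corr ω k + cVer ω k := by
  simp [corr, fQ_add_single_succ, add_assoc]

lemma ans_flipKey : ans (flipKey k ω) k = ans ω k + cVer ω k := by
  by_cases h : cVer ω k = cAdv ω k
  · simp [ans, resp, h, fQ_add_single_succ, add_assoc]
  · simp [ans, h]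

lemma ans_eq_corr_flipKey_iff :
    ans (flipKey k ω) k = corr (flipKey k ω) k ↔ ans ω k = corr ω k := by
  rw [ans_flipKey, corr_flipKey, add_left_inj]

lemma S_succ_flipKey_iff (h : cVer ω k ≠ cAdv ω k) :
    S (k + 1) (flipKey k ω) ↔ ¬ S (k + 1) ω := by
  simpa [S, fQ_add_single_succ] using ZMod.add_eq_add_iff_ne_of_ne h _ _

end Flips

section Counting

variable (k : Fin n)

lemma two_mul_pr_not_Cne_succ :
    2 * pr n (fun ω ↦ ¬ Cne (k + 1) ω) = pr n (fun ω ↦ ¬ Cne k ω) := by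
  rw [← two_mul_pr_and_of_involutive (flipCVer_involutive k)
    (P := fun ω ↦ ¬ Cne k ω) (Q := fun ω ↦ cVer ω k = cAdv ω k)
    (fun ω ↦ by simpa using ((agreeBelow_flipCVer k ω).Cne_iff).not.2)
    (fun ω _ ↦ cVer_flipCVer_eq_iff k ω)]
  congr 1
  exact pr_congr fun ω ↦ by rw [Cne_succ]; tauto

lemma pr_not_Cne {i : ℕ} (hi : i ≤ n) : pr n (fun ω ↦ ¬ Cne i ω) = (1 / 2) ^ i := by
  induction i with
  | zero => simpa using pr_of_forall fun ω (⟨_, hj, _⟩ : Cne 0 ω) ↦ Nat.not_lt_zero _ hj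
  | succ i ih =>
    have h := two_mul_pr_not_Cne_succ (⟨i, hi⟩ : Fin n)
    rw [ih (by omega)] at h
    rw [pow_succ]
    linarith

lemma pr_Cne {i : ℕ} (hi : i ≤ n) : pr n (Cne i) = 1 - (1 / 2) ^ i := by
  rw [← pr_not_Cne hi, ← pr_add_pr_not (Cne i), add_sub_cancel_right]

lemma two_mul_pr_lastEq_and :
    2 * pr n (fun ω ↦ lastEq (k + 1) ω ∧ Cne (k + 1) ω ∧ M (k + 1) ω)
      = pr n (fun ω ↦ S k ω ∧ Cne k ω ∧ M k ω) := by
  rw [← two_mul_pr_and_of_involutive (flipCVer_involutive k)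
    (P := fun ω ↦ S k ω ∧ Cne k ω ∧ M k ω) (Q := fun ω ↦ cVer ω k = cAdv ω k)
    (fun ω ↦ by
      have h := agreeBelow_flipCVer k ω
      rw [h.S_iff, h.Cne_iff, h.M_iff]
      exact id)
    (fun ω _ ↦ cVer_flipCVer_eq_iff k ω)]
  congr 1
  refine pr_congr fun ω ↦ ?_
  rw [lastEq_succ, Cne_succ, M_succ]
  constructor
  · rintro ⟨he, hc, hm, hw⟩
    exact ⟨⟨(S_succ_iff_of_eq he).1 ((ans_eq_corr_iff_of_eq he).1 hw),
      hc.resolve_right (· he), hm⟩, he⟩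
  · rintro ⟨⟨hS, hc, hm⟩, he⟩
    exact ⟨he, .inl hc, hm, (ans_eq_corr_iff_of_eq he).2 ((S_succ_iff_of_eq he).2 hS)⟩

lemma two_mul_pr_S_succ_and :
    2 * pr n (fun ω ↦ S (k + 1) ω ∧ Cne (k + 1) ω ∧ M (k + 1) ω)
      = pr n (fun ω ↦ Cne (k + 1) ω ∧ M (k + 1) ω)
        + pr n (fun ω ↦ lastEq (k + 1) ω ∧ Cne (k + 1) ω ∧ M (k + 1) ω) := by
  set A := fun ω ↦ Cne (k + 1) ω ∧ M (k + 1) ω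
  set E := fun ω : MafiaΩ n ↦ cVer ω k = cAdv ω k
  have hsplitS := pr_and_add_pr_and_not (fun ω ↦ S (k + 1) ω ∧ A ω) E
  have hsplitA := pr_and_add_pr_and_not A E
  have hrelay : pr n (fun ω ↦ (S (k + 1) ω ∧ A ω) ∧ E ω) = pr n (fun ω ↦ A ω ∧ E ω) :=
    pr_congr fun ω ↦ ⟨fun h ↦ h.imp_left And.right, fun ⟨hA, he⟩ ↦
      ⟨⟨(ans_eq_corr_iff_of_eq he).1 ((M_succ k ω).1 hA.2).2, hA⟩, he⟩⟩
  have hflip : 2 * pr n (fun ω ↦ (A ω ∧ ¬ E ω) ∧ S (k + 1) ω) = pr n (fun ω ↦ A ω ∧ ¬ E ω) :=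
    two_mul_pr_and_of_involutive (flipKey_involutive k)
      (fun ω ⟨⟨hc, hm⟩, hne⟩ ↦ by
        refine ⟨⟨hc, ?_⟩, hne⟩
        rw [M_succ] at hm ⊢
        exact ⟨(agreeBelow_flipKey k ω).M_iff.2 hm.1, (ans_eq_corr_flipKey_iff k ω).2 hm.2⟩)
      (fun ω h ↦ S_succ_flipKey_iff k ω h.2)
  have hswap : pr n (fun ω ↦ (S (k + 1) ω ∧ A ω) ∧ ¬ E ω)
      = pr n (fun ω ↦ (A ω ∧ ¬ E ω) ∧ S (k + 1) ω) := pr_congr fun ω ↦ by tauto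
  have hlast : pr n (fun ω ↦ lastEq (k + 1) ω ∧ A ω) = pr n (fun ω ↦ A ω ∧ E ω) :=
    pr_congr fun ω ↦ by rw [lastEq_succ]; exact and_comm
  linarith

end Counting

lemma cpr_S_succ (k : Fin n) (hA : pr n (fun ω ↦ Cne (k + 1) ω ∧ M (k + 1) ω) ≠ 0) :
    cpr n (S (k + 1)) (fun ω ↦ Cne (k + 1) ω ∧ M (k + 1) ω)
      = 1 / 2 + 1 / 2 * cpr n (lastEq (k + 1)) (fun ω ↦ Cne (k + 1) ω ∧ M (k + 1) ω) := by
  unfold cpr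
  field_simp
  linear_combination two_mul_pr_S_succ_and k

lemma cpr_lastEq_succ (k : Fin n) (hC : pr n (Cne k) ≠ 0) (hC' : pr n (Cne (k + 1)) ≠ 0)
    (hA : pr n (fun ω ↦ Cne k ω ∧ M k ω) ≠ 0)
    (hA' : pr n (fun ω ↦ Cne (k + 1) ω ∧ M (k + 1) ω) ≠ 0) :
    cpr n (lastEq (k + 1)) (fun ω ↦ Cne (k + 1) ω ∧ M (k + 1) ω)
      = cpr n (S k) (fun ω ↦ Cne k ω ∧ M k ω) * cpr n (M k) (Cne k)
          * (1 / 2 - (1 / 2) ^ ((k : ℕ) + 1))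
        / (cpr n (M (k + 1)) (Cne (k + 1)) * (1 - (1 / 2) ^ ((k : ℕ) + 1))) := by
  have hhalf : (1 / 2 : ℚ) - (1 / 2) ^ ((k : ℕ) + 1) = pr n (Cne k) / 2 := by
    rw [pr_Cne k.isLt.le]; ring
  rw [hhalf, ← pr_Cne k.isLt]
  simp only [cpr, pr_and_comm (M _)]
  field_simp
  linear_combination two_mul_pr_lastEq_and k

lemma cpr_S_one (hn : 1 ≤ n) : cpr n (S 1) (fun ω ↦ Cne 1 ω ∧ M 1 ω) = 1 / 2 := by
  have h := two_mul_pr_S_succ_and (⟨0, hn⟩ : Fin n)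
  simp only [zero_add] at h
  have hL : pr n (fun ω ↦ lastEq 1 ω ∧ Cne 1 ω ∧ M 1 ω) = 0 :=
    pr_eq_zero fun ω ⟨hlast, ⟨j, hj, hne⟩, _⟩ ↦ hne (hlast j (by omega))
  have hA : pr n (fun ω ↦ Cne 1 ω ∧ M 1 ω) ≠ 0 := by
    refine pr_ne_zero (ω := (0, 0, 0, 0, 1, 0)) ⟨⟨⟨0, hn⟩, zero_lt_one, by simp⟩, fun j hj ↦ ?_⟩
    simp [ans, corr, reg, fQ, show (j : ℕ) = 0 by omega]
  rw [cpr, div_eq_iff hA]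
  linarith

end Mafia

open Mafia in
/-- the decomposition of `Pr(S_i | C_i ≠ C̃_i, M_i)` via the
probability that the `i`-th challenges agree (Lemma 2 of the paper), together
with the stopping condition, whenever all the involved conditional
probabilities are well defined. -/
theorem mafia_fraud_S_recursion (n : ℕ) (hn : 1 ≤ n) :
    (∀ i, 2 ≤ i → i ≤ n →
      pr n (Cne i) ≠ 0 →
      pr n (Cne (i - 1)) ≠ 0 →
      pr n (fun ω => Cne (i - 1) ω ∧ M (i - 1) ω) ≠ 0 →
      pr n (fun ω => Cne i ω ∧ M i ω) ≠ 0 →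
      (cpr n (S i) (fun ω => Cne i ω ∧ M i ω)
          = 1 / 2 + (1 / 2) * cpr n (lastEq i) (fun ω => Cne i ω ∧ M i ω)) ∧
      (cpr n (lastEq i) (fun ω => Cne i ω ∧ M i ω)
          = (cpr n (S (i - 1)) (fun ω => Cne (i - 1) ω ∧ M (i - 1) ω)
              * cpr n (M (i - 1)) (Cne (i - 1))
              * (1 / 2 - (1 / 2) ^ i))
            / (cpr n (M i) (Cne i) * (1 - (1 / 2) ^ i)))) ∧
    cpr n (S 1) (fun ω => Cne 1 ω ∧ M 1 ω) = 1 / 2 := by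
  refine ⟨fun i _ hin hC' hC hA hA' ↦ ?_, cpr_S_one hn⟩
  obtain ⟨k, rfl⟩ : ∃ k : Fin n, i = k + 1 := ⟨⟨i - 1, by omega⟩, by simp only; omega⟩
  rw [Nat.add_sub_cancel] at hC hA ⊢
  exact ⟨cpr_S_succ k hA', cpr_lastEq_succ k hC hC' hA hA'⟩
end

section
/- Let q, c, c̃, r₀, r₁ be five independent uniformly distributed random bits, and let f, g ∈ {0,1} be fixed bits. Define the correct response e = (if c = 0 then r₀ else r₁) ⊕ f ⊕ (q ∧ c) and the malicious prover's early reply a = (if c̃ = 0 then r₀ else r₁) ⊕ g ⊕ (q ∧ c̃). Then Pr(a = e) = 3/4 if g = f, and Pr(a = e) = 1/4 if g ≠ f. (This is the single-round distance-fraud success probability conditioned on the current guess of f_Q(C_{i−1}) being correct, respectively incorrect.) -/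
/-!
Bits are elements of `ZMod 2` (XOR is `+`, AND is `*`) and a sample point is `(q, c, c̃, r₀, r₁)`.
Condition on `(q, c, c̃)`. If the guess `c̃` equals the challenge `c`, the reply and the correct
response differ exactly by `g - f`, so every choice of `(r₀, r₁)` succeeds when `g = f` and none
does otherwise. If `c̃ ≠ c`, success is a single linear equation between `r₀` and `r₁`, satisfied
by half of the register pairs whatever `f` and `g` are. Hence `Pr(a = e) = ½·[g = f] + ¼`.
-/

open Finset

def response (q c r₀ r₁ x : ZMod 2) : ZMod 2 := (if c = 0 then r₀ else r₁) + x + q * c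

theorem card_filter_add_eq_add {G : Type*} [AddGroup G] [Fintype G] [DecidableEq G] (a b : G) :
    #{r : G × G | r.1 + a = r.2 + b} = Fintype.card G := by
  rw [← card_univ, ← card_image_of_injective univ (fun _ _ h => congrArg Prod.snd h :
    Function.Injective fun s : G => (s + b - a, s))]
  congr 1
  ext ⟨r₁, r₂⟩
  simp only [mem_filter, mem_univ, true_and, mem_image, Prod.mk.injEq, exists_eq_right]
  exact (sub_eq_iff_eq_add.trans eq_comm).symm

theorem card_response_eq (q c c' x y : ZMod 2) :
    #{r : ZMod 2 × ZMod 2 | response q c' r.1 r.2 y = response q c r.1 r.2 x} =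
      if c' = c then (if y = x then 4 else 0) else 2 := by
  by_cases hc : c' = c
  · subst hc
    by_cases hxy : y = x <;> simp [response, hxy]
  · have hcases : (c, c') = (0, 1) ∨ (c, c') = (1, 0) := by revert c c'; decide
    rcases hcases with h | h <;> simp only [Prod.mk.injEq] at h <;> obtain ⟨rfl, rfl⟩ := h
    · simpa [response, add_assoc, eq_comm] using card_filter_add_eq_add x (y + q)
    · simpa [response, add_assoc, eq_comm] using card_filter_add_eq_add y (x + q)

theorem card_response_eq_univ (f g : ZMod 2) :
    #{p : ZMod 2 × ZMod 2 × ZMod 2 × ZMod 2 × ZMod 2 |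
        response p.1 p.2.2.1 p.2.2.2.1 p.2.2.2.2 g = response p.1 p.2.1 p.2.2.2.1 p.2.2.2.2 f} =
      if g = f then 24 else 8 := by
  have hfiber := fun q c c' => card_response_eq q c c' f g
  simp only [card_filter, Fintype.sum_prod_type] at hfiber ⊢
  simp only [hfiber]
  by_cases h : g = f <;> simp only [h, if_true, if_false] <;> decide

/-- single-round distance-fraud success probability. Bits are
elements of `ZMod 2` (XOR is `+`, AND is `*`).  A sample point is
`(q, c, c̃, r₀, r₁)`, the five independent uniform bits; `f` is the true value
of `f_Q(C_{i-1})` and `g` the malicious prover's guess of it.  The correct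
response is `e = R^c ⊕ f ⊕ (q ∧ c)` and the early reply is
`a = R^{c̃} ⊕ g ⊕ (q ∧ c̃)`.  Then `Pr(a = e) = 3/4` if `g = f` and
`Pr(a = e) = 1/4` if `g ≠ f`. -/
theorem distance_fraud_single_round (f g : ZMod 2) :
    (g = f →
      ((((Finset.univ : Finset (ZMod 2 × ZMod 2 × ZMod 2 × ZMod 2 × ZMod 2)).filter
          (fun p =>
            (if p.2.2.1 = 0 then p.2.2.2.1 else p.2.2.2.2) + g + p.1 * p.2.2.1
              = (if p.2.1 = 0 then p.2.2.2.1 else p.2.2.2.2) + f + p.1 * p.2.1)).card : ℚ)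
        / ((Finset.univ : Finset (ZMod 2 × ZMod 2 × ZMod 2 × ZMod 2 × ZMod 2)).card : ℚ)
        = 3 / 4)) ∧
    (g ≠ f →
      ((((Finset.univ : Finset (ZMod 2 × ZMod 2 × ZMod 2 × ZMod 2 × ZMod 2)).filter
          (fun p =>
            (if p.2.2.1 = 0 then p.2.2.2.1 else p.2.2.2.2) + g + p.1 * p.2.2.1
              = (if p.2.1 = 0 then p.2.2.2.1 else p.2.2.2.2) + f + p.1 * p.2.1)).card : ℚ)
        / ((Finset.univ : Finset (ZMod 2 × ZMod 2 × ZMod 2 × ZMod 2 × ZMod 2)).card : ℚ)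
        = 1 / 4)) := by
  have hall : (Finset.univ : Finset (ZMod 2 × ZMod 2 × ZMod 2 × ZMod 2 × ZMod 2)).card = 32 := by
    simp
  constructor
  · intro h
    erw [card_response_eq_univ, hall, if_pos h]
    norm_num
  · intro h
    erw [card_response_eq_univ, hall, if_neg h]
    norm_num
end
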